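/- Let V be a real vector space with a nondegenerate symmetric bilinear form. The set of rational 2-dimensional positive-definite subspaces is dense in the Grassmannian Gr₊₊(V) of 2-dimensional subspaces on which the form is positive definite. -/

import Mathlib

open LinearMap (BilinForm)

variable {V : Type*} [AddCommGroup V] [Module ℝ V] [FiniteDimensional ℝ V]
  [TopologicalSpace V] [IsTopologicalAddGroup V] [ContinuousSMul ℝ V]

/-- A lattice in `(V, B)`: a discrete, spanning additive subgroup on which the
form takes rational values. -/
def IsLatticeIn (B : BilinForm ℝ V) (L : AddSubgroup V) : Prop :=
  DiscreteTopology L ∧ Submodule.span ℝ (L : Set V) = ⊤ ∧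
    ∀ x ∈ L, ∀ y ∈ L, ∃ q : ℚ, B x y = (q : ℝ)

/-- `O(L)`: the group of isometries of `(V, B)` preserving `L`. -/
def latticeIsoms (B : BilinForm ℝ V) (L : AddSubgroup V) : Subgroup (V ≃ₗ[ℝ] V) where
  carrier := {g | (∀ x y, B (g x) (g y) = B x y) ∧ ∀ x, x ∈ L ↔ g x ∈ L}
  one_mem' := ⟨fun _ _ => rfl, fun _ => Iff.rfl⟩
  mul_mem' := by
    rintro g h ⟨hg1, hg2⟩ ⟨hh1, hh2⟩
    exact ⟨fun x y => (hg1 (h x) (h y)).trans (hh1 x y), fun x => (hh2 x).trans (hg2 (h x))⟩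
  inv_mem' := by
    rintro g ⟨hg1, hg2⟩
    constructor
    · intro x y
      change (B (g.symm x)) (g.symm y) = (B x) y
      have h2 := hg1 (g.symm x) (g.symm y)
      simp only [LinearEquiv.apply_symm_apply] at h2
      exact h2.symm
    · intro x
      have := hg2 (g.symm x)
      simp only [LinearEquiv.apply_symm_apply] at this
      exact this.symm


/-- The restriction of `B` to `W` has signature `(p, m)`: there is a spanning
`B`-orthogonal family in `W` with `p` positive and `m` negative vectors. -/
def SignatureOn (B : BilinForm ℝ V) (W : Submodule ℝ V) (p m : ℕ) : Prop :=
  ∃ v : Fin (p + m) → V, (∀ i, v i ∈ W) ∧ Submodule.span ℝ (Set.range v) = W ∧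
    (∀ i j, i ≠ j → B (v i) (v j) = 0) ∧
    (∀ i : Fin (p + m), ((i : ℕ) < p → 0 < B (v i) (v i)) ∧ (p ≤ (i : ℕ) → B (v i) (v i) < 0))

/-- A subspace is rational (w.r.t. the lattice `L`) if it is spanned by its
intersection with `L`. -/
def IsRatSubspace (L : AddSubgroup V) (W : Submodule ℝ V) : Prop :=
  Submodule.span ℝ ((W : Set V) ∩ (L : Set V)) = W

/-- `B` is positive definite on `W`. -/
def PosDefOn (B : BilinForm ℝ V) (W : Submodule ℝ V) : Prop :=
  ∀ x ∈ W, x ≠ 0 → 0 < B x x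

/-- The Grassmannian topology on the set of subspaces of Euclidean space,
induced by the map sending a subspace to its orthogonal projection operator. -/
noncomputable instance grTop {n : ℕ} :
    TopologicalSpace (Submodule ℝ (EuclideanSpace ℝ (Fin n))) :=
  TopologicalSpace.induced
    (fun W => (W.subtypeL.comp (W.orthogonalProjection) :
      EuclideanSpace ℝ (Fin n) →L[ℝ] EuclideanSpace ℝ (Fin n))) inferInstance


section DensityAux
open RealInnerProductSpace
set_option linter.unusedSectionVars false

variable {E : Type*} [NormedAddCommGroup E] [InnerProductSpace ℝ E] [FiniteDimensional ℝ E]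

noncomputable def rk1 (a b : E) : E →L[ℝ] E := (innerSL ℝ a).smulRight b
noncomputable def gdet (u v : E) : ℝ := ⟪u,u⟫*⟪v,v⟫ - ⟪u,v⟫*⟪u,v⟫
noncomputable def qOp (u v : E) : E →L[ℝ] E :=
  (gdet u v)⁻¹ • (⟪v,v⟫ • rk1 u u - ⟪u,v⟫ • rk1 v u + ⟪u,u⟫ • rk1 v v - ⟪u,v⟫ • rk1 u v)
lemma rk1_apply (a b x : E) : rk1 a b x = ⟪a,x⟫ • b := rfl
lemma qOp_apply (u v x : E) : qOp u v x = (gdet u v)⁻¹ •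
    ((⟪v,v⟫*⟪u,x⟫ - ⟪u,v⟫*⟪v,x⟫) • u + (⟪u,u⟫*⟪v,x⟫ - ⟪u,v⟫*⟪u,x⟫) • v) := by
  simp only [qOp, ContinuousLinearMap.smul_apply, ContinuousLinearMap.sub_apply,
    ContinuousLinearMap.add_apply, rk1_apply]
  module

lemma qOp_continuousAt {u v : E} (hd : gdet u v ≠ 0) :
    ContinuousAt (fun p : E × E => qOp p.1 p.2) (u, v) := by
  have hrk : Continuous fun p : E × E => rk1 p.1 p.2 := by
    have h1 : Continuous fun p : E × E => ((innerSL ℝ p.1 : E →L[ℝ] ℝ), p.2) :=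
      ((innerSL ℝ).continuous.comp continuous_fst).prodMk continuous_snd
    exact (isBoundedBilinearMap_smulRight (𝕜 := ℝ)).continuous.comp h1
  have hin : ∀ (f g : E × E → E), Continuous f → Continuous g →
      Continuous fun p : E × E => ⟪f p, g p⟫ := fun f g hf hg => hf.inner hg
  have hfst : Continuous fun p : E × E => p.1 := continuous_fst
  have hsnd : Continuous fun p : E × E => p.2 := continuous_snd
  have hgd : Continuous fun p : E × E => gdet p.1 p.2 := by
    unfold gdet
    exact ((hin _ _ hfst hfst).mul (hin _ _ hsnd hsnd)).sub
      ((hin _ _ hfst hsnd).mul (hin _ _ hfst hsnd))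
  unfold qOp
  apply ContinuousAt.fun_smul
  · exact (hgd.continuousAt).inv₀ hd
  · apply ContinuousAt.sub
    apply ContinuousAt.add
    apply ContinuousAt.sub
    · exact ((hin _ _ hsnd hsnd).continuousAt).smul
        ((hrk.comp (hfst.prodMk hfst)).continuousAt)
    · exact ((hin _ _ hfst hsnd).continuousAt).smul
        ((hrk.comp (hsnd.prodMk hfst)).continuousAt)
    · exact ((hin _ _ hfst hfst).continuousAt).smul
        ((hrk.comp (hsnd.prodMk hsnd)).continuousAt)
    · exact ((hin _ _ hfst hsnd).continuousAt).smul
        ((hrk.comp (hfst.prodMk hsnd)).continuousAt)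

lemma qOp_eq_proj (u v : E) (hd : gdet u v ≠ 0) :
    ∀ x : E, qOp u v x =
      ((Submodule.span ℝ {u, v}).subtypeL.comp
        ((Submodule.span ℝ {u, v}).orthogonalProjection)) x := by
  intro x
  have hmem : qOp u v x ∈ Submodule.span ℝ {u, v} := by
    rw [qOp_apply]
    have hu : u ∈ Submodule.span ℝ {u, v} := Submodule.subset_span (by simp)
    have hv : v ∈ Submodule.span ℝ {u, v} := Submodule.subset_span (by simp)
    exact Submodule.smul_mem _ _ (Submodule.add_mem _ (Submodule.smul_mem _ _ hu)
      (Submodule.smul_mem _ _ hv))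
  have horth : ∀ w ∈ Submodule.span ℝ {u, v}, ⟪x - qOp u v x, w⟫ = 0 := by
    intro w hw
    rw [Submodule.mem_span_pair] at hw
    obtain ⟨a, b, rfl⟩ := hw
    rw [qOp_apply]
    have hvu : ⟪v, u⟫ = ⟪u, v⟫ := real_inner_comm u v
    have hxu : ⟪u, x⟫ = ⟪x, u⟫ := real_inner_comm x u
    have hxv : ⟪v, x⟫ = ⟪x, v⟫ := real_inner_comm x v
    simp only [inner_sub_left, inner_add_right, inner_smul_left, inner_smul_right,
      inner_add_left, inner_smul_left, real_inner_smul_left, RCLike.star_def, conj_trivial]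
    rw [hvu, hxu, hxv]
    unfold gdet at hd ⊢
    have hd2 : ⟪u, u⟫ * ⟪v, v⟫ - ⟪u, v⟫ ^ 2 ≠ 0 := by rwa [sq]
    field_simp
    ring
  symm
  exact (Submodule.eq_starProjection_of_mem_of_inner_eq_zero hmem horth :)

end DensityAux

section QuadAux
set_option linter.unusedSectionVars false
variable {E : Type*} [AddCommGroup E] [Module ℝ E]

lemma bilin_expand (Φ : BilinForm ℝ E) (u v : E) (hsym : Φ u v = Φ v u) (a b : ℝ) :
    Φ (a • u + b • v) (a • u + b • v) =
      a^2 * Φ u u + 2*(a*b) * Φ u v + b^2 * Φ v v := by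
  simp only [map_add, map_smul, LinearMap.add_apply, LinearMap.smul_apply, smul_eq_mul]
  rw [hsym]; ring

lemma pair_indep_of_det_pos (Φ : BilinForm ℝ E) (u v : E) (hsym : Φ u v = Φ v u)
    (hu : 0 < Φ u u) (hdet : 0 < Φ u u * Φ v v - Φ u v * Φ u v) :
    ∀ a b : ℝ, a • u + b • v = 0 → a = 0 ∧ b = 0 := by
  intro a b hab
  have h0 : Φ (a • u + b • v) (a • u + b • v) = 0 := by rw [hab]; simp
  rw [bilin_expand Φ u v hsym] at h0
  have h1 : (a * Φ u u + b * Φ u v)^2 + b^2 * (Φ u u * Φ v v - Φ u v * Φ u v) = 0 := by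
    linear_combination (Φ u u) * h0
  have hble : b^2 ≤ 0 := by nlinarith [sq_nonneg (a * Φ u u + b * Φ u v)]
  have hb : b = 0 := by
    have := le_antisymm hble (sq_nonneg b)
    exact pow_eq_zero_iff two_ne_zero |>.mp this
  subst hb
  refine ⟨?_, rfl⟩
  have hale : a^2 ≤ 0 := by nlinarith
  have := le_antisymm hale (sq_nonneg a)
  exact pow_eq_zero_iff two_ne_zero |>.mp this

lemma posdef_span_of_det_pos (Φ : BilinForm ℝ E) (u v : E) (hsym : Φ u v = Φ v u)
    (hu : 0 < Φ u u) (hdet : 0 < Φ u u * Φ v v - Φ u v * Φ u v) :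
    ∀ x ∈ Submodule.span ℝ {u, v}, x ≠ 0 → 0 < Φ x x := by
  intro x hx hx0
  rw [Submodule.mem_span_pair] at hx
  obtain ⟨a, b, rfl⟩ := hx
  rw [bilin_expand Φ u v hsym]
  have hab : ¬ (a = 0 ∧ b = 0) := by
    rintro ⟨rfl, rfl⟩; simp at hx0
  rcases eq_or_ne b 0 with rfl | hb
  · have ha : a ≠ 0 := by tauto
    have : 0 < a^2 := by positivity
    nlinarith
  · nlinarith [sq_nonneg (a * Φ u u + b * Φ u v),
      mul_pos (mul_pos (pow_pos (abs_pos.mpr hb) 2) hdet) hu,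
      sq_abs b, pow_pos (abs_pos.mpr hb) 2]

lemma det_pos_of_posdef (Φ : BilinForm ℝ E) (u v : E) (hsym : Φ u v = Φ v u)
    (hind : ∀ a b : ℝ, a • u + b • v = 0 → a = 0 ∧ b = 0)
    (hpos : ∀ x ∈ Submodule.span ℝ {u, v}, x ≠ 0 → 0 < Φ x x) :
    0 < Φ u u ∧ 0 < Φ u u * Φ v v - Φ u v * Φ u v := by
  have hu0 : u ≠ 0 := by
    intro h
    have := hind 1 0 (by simp [h])
    exact one_ne_zero this.1
  have huu : 0 < Φ u u := hpos u (Submodule.subset_span (by simp)) hu0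
  refine ⟨huu, ?_⟩
  set z : E := (-(Φ u v)) • u + (Φ u u) • v with hz
  have hzmem : z ∈ Submodule.span ℝ {u, v} :=
    Submodule.add_mem _ (Submodule.smul_mem _ _ (Submodule.subset_span (by simp)))
      (Submodule.smul_mem _ _ (Submodule.subset_span (by simp)))
  have hz0 : z ≠ 0 := by
    intro h
    have := (hind _ _ h).2
    exact huu.ne' this
  have hzz : 0 < Φ z z := hpos z hzmem hz0
  have hexp : Φ z z = Φ u u * (Φ u u * Φ v v - Φ u v * Φ u v) := by
    rw [hz, bilin_expand Φ u v hsym]; ring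
  rw [hexp] at hzz
  nlinarith

end QuadAux

section RatAux
set_option linter.unusedSectionVars false
variable {E : Type*} [NormedAddCommGroup E] [NormedSpace ℝ E] [FiniteDimensional ℝ E]

def ratPts (L : AddSubgroup E) : Set E := {x | ∃ k : ℕ, 0 < k ∧ (k : ℝ) • x ∈ L}

lemma int_of_den_dvd (q : ℚ) (k : ℕ) (h : q.den ∣ k) : ∃ m : ℤ, ((k : ℚ) * q) = m := by
  obtain ⟨t, ht⟩ := h
  refine ⟨t * q.num, ?_⟩
  have hden : (q.den : ℚ) ≠ 0 := by exact_mod_cast q.den_nz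
  have h1 : (q.den : ℚ) * q = (q.num : ℚ) := by
    have := (div_eq_iff hden).mp (Rat.num_div_den q)
    linarith
  calc ((k : ℚ)) * q = (t : ℚ) * ((q.den : ℚ) * q) := by push_cast [ht]; ring
    _ = (t : ℚ) * (q.num : ℚ) := by rw [h1]
    _ = ((t * q.num : ℤ) : ℚ) := by push_cast; ring

lemma dense_ratPts (L : AddSubgroup E) (hspan : Submodule.span ℝ (L : Set E) = ⊤) :
    Dense (ratPts L) := by
  obtain ⟨b, hbL, hbsp, hbli⟩ := exists_linearIndependent ℝ (L : Set E)
  rw [hspan] at hbsp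
  have hfin : b.Finite := hbli.setFinite
  haveI : Fintype b := hfin.fintype
  let bb : Module.Basis b ℝ E := Module.Basis.mk hbli (by rw [Subtype.range_coe, hbsp])
  let e : E ≃L[ℝ] (b → ℝ) := (bb.equivFun : E ≃ₗ[ℝ] (b → ℝ)).toContinuousLinearEquiv
  have hQdense : Dense {c : b → ℝ | ∀ i, ∃ q : ℚ, c i = (q : ℝ)} := by
    have : {c : b → ℝ | ∀ i, ∃ q : ℚ, c i = (q : ℝ)} =
        Set.pi Set.univ (fun _ => Set.range ((↑) : ℚ → ℝ)) := by
      ext c; simp [Set.mem_pi, eq_comm]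
    rw [this]
    exact dense_pi Set.univ fun i _ => Rat.denseRange_cast
  have hsub : e.symm '' {c : b → ℝ | ∀ i, ∃ q : ℚ, c i = (q : ℝ)} ⊆ ratPts L := by
    rintro x ⟨c, hc, rfl⟩
    choose q hq using hc
    refine ⟨∏ i, (q i).den, ?_, ?_⟩
    · exact Finset.prod_pos fun i _ => (q i).pos
    · have hx : (e.symm c : E) = ∑ i, c i • (bb i) := by
        show (bb.equivFun.symm c : E) = _
        rw [Module.Basis.equivFun_symm_apply]
      rw [hx, Finset.smul_sum]
      refine AddSubgroup.sum_mem L fun i _ => ?_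
      obtain ⟨m, hm⟩ := int_of_den_dvd (q i) (∏ j, (q j).den)
        (Finset.dvd_prod_of_mem _ (Finset.mem_univ i))
      have hbi : (bb i : E) ∈ L := by
        have : (bb i : E) = (i : E) := by simp [bb]
        rw [this]; exact hbL i.2
      have : ((∏ j, (q j).den : ℕ) : ℝ) • c i • (bb i : E) = m • (bb i : E) := by
        rw [smul_smul, hq i]
        rw [← Int.cast_smul_eq_zsmul ℝ]
        congr 1
        exact_mod_cast congrArg (Rat.cast : ℚ → ℝ) hm
      rw [this]
      exact AddSubgroup.zsmul_mem L hbi m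
  refine Dense.mono hsub ?_
  exact (e.symm.toHomeomorph.surjective.denseRange).dense_image e.symm.continuous hQdense

lemma isRatSubspace_span_pair (L : AddSubgroup E) {w₀ w₁ : E}
    (h₀ : w₀ ∈ ratPts L) (h₁ : w₁ ∈ ratPts L) :
    IsRatSubspace L (Submodule.span ℝ {w₀, w₁}) := by
  obtain ⟨k₀, hk₀, hkw₀⟩ := h₀
  obtain ⟨k₁, hk₁, hkw₁⟩ := h₁
  unfold IsRatSubspace
  apply le_antisymm
  · rw [Submodule.span_le]
    exact fun x hx => hx.1
  · rw [Submodule.span_le]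
    rintro x (rfl | rfl)
    · have hmem : (k₀ : ℝ) • x ∈ (Submodule.span ℝ {x, w₁} : Set E) ∩ L :=
        ⟨Submodule.smul_mem _ _ (Submodule.subset_span (by simp)), hkw₀⟩
      have h2 := Submodule.smul_mem (Submodule.span ℝ ((Submodule.span ℝ {x, w₁} : Set E) ∩ L))
        (k₀ : ℝ)⁻¹ (Submodule.subset_span hmem)
      rwa [smul_smul, inv_mul_cancel₀ (by positivity), one_smul] at h2
    · have hmem : (k₁ : ℝ) • x ∈ (Submodule.span ℝ {w₀, x} : Set E) ∩ L :=
        ⟨Submodule.smul_mem _ _ (Submodule.subset_span (by simp)), hkw₁⟩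
      have h2 := Submodule.smul_mem (Submodule.span ℝ ((Submodule.span ℝ {w₀, x} : Set E) ∩ L))
        (k₁ : ℝ)⁻¹ (Submodule.subset_span hmem)
      rwa [smul_smul, inv_mul_cancel₀ (by positivity), one_smul] at h2

lemma range_pair {α : Type*} (a b : α) : Set.range ![a, b] = {a, b} := by
  ext x
  constructor
  · rintro ⟨i, rfl⟩; fin_cases i <;> simp
  · rintro (rfl | rfl)
    · exact ⟨0, rfl⟩
    · exact ⟨1, rfl⟩

lemma finrank_span_pair_eq_two {w₀ w₁ : E}
    (hind : ∀ a b : ℝ, a • w₀ + b • w₁ = 0 → a = 0 ∧ b = 0) :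
    Module.finrank ℝ (Submodule.span ℝ ({w₀, w₁} : Set E)) = 2 := by
  have hli : LinearIndependent ℝ ![w₀, w₁] := LinearIndependent.pair_iff.mpr hind
  have := finrank_span_eq_card hli
  rwa [range_pair, Fintype.card_fin] at this

end RatAux

/-- Rational positive-definite 2-planes are dense in the
Grassmannian `Gr₊₊(V)` of positive-definite 2-planes. -/
theorem stmt5 (n sp sm : ℕ) (B : BilinForm ℝ (EuclideanSpace ℝ (Fin n)))
    (hB : B.Nondegenerate) (hsymm : B.IsSymm)
    (hsig : SignatureOn B ⊤ sp sm) (hsp : 2 ≤ sp)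
    (L : AddSubgroup (EuclideanSpace ℝ (Fin n))) (hL : IsLatticeIn B L) :
    Dense {W : {W : Submodule ℝ (EuclideanSpace ℝ (Fin n)) //
        Module.finrank ℝ W = 2 ∧ PosDefOn B W} | IsRatSubspace L W.1} := by
  classical
  set E := EuclideanSpace ℝ (Fin n) with hE
  obtain ⟨-, hLspan, -⟩ := hL
  have hBsym : ∀ x y : E, B x y = B y x := fun x y => hsymm.eq x y
  have hBcont : Continuous fun p : E × E => B p.1 p.2 := by
    have h1 : Continuous fun x : E => (LinearMap.toContinuousLinearMap (B x) : E →L[ℝ] ℝ) :=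
      LinearMap.continuous_of_finiteDimensional
        ((LinearMap.toContinuousLinearMap :
          (E →ₗ[ℝ] ℝ) ≃ₗ[ℝ] (E →L[ℝ] ℝ)).toLinearMap.comp B)
    have h2 : Continuous fun p : (E →L[ℝ] ℝ) × E => p.1 p.2 :=
      isBoundedBilinearMap_apply.continuous
    have h3 := h2.comp ((h1.comp continuous_fst).prodMk continuous_snd)
    exact h3
  have hIPD : ∀ u v : E, (∀ a b : ℝ, a • u + b • v = 0 → a = 0 ∧ b = 0) →
      gdet u v ≠ 0 := by
    intro u v hind
    have hpd : ∀ x ∈ Submodule.span ℝ {u, v}, x ≠ 0 →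
        0 < (innerₗ E : BilinForm ℝ E) x x := by
      intro x _ hx0
      have hne : (inner ℝ x x : ℝ) ≠ 0 := fun h => hx0 ((inner_self_eq_zero (𝕜 := ℝ)).mp h)
      have hpos : 0 < (inner ℝ x x : ℝ) := lt_of_le_of_ne real_inner_self_nonneg (Ne.symm hne)
      simpa using hpos
    have h := det_pos_of_posdef (innerₗ E : BilinForm ℝ E) u v
      (by simpa using real_inner_comm v u) hind hpd
    have h2 : 0 < gdet u v := by simpa [gdet] using h.2
    exact h2.ne'
  let G : {W : Submodule ℝ E // Module.finrank ℝ W = 2 ∧ PosDefOn B W} → (E →L[ℝ] E) :=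
    fun p => ((p.1).subtypeL.comp (p.1).orthogonalProjection : E →L[ℝ] E)
  have hind : Topology.IsInducing G := by
    constructor
    exact (induced_compose (f := (Subtype.val : {W : Submodule ℝ E //
        Module.finrank ℝ W = 2 ∧ PosDefOn B W} → Submodule ℝ E))
      (g := fun W : Submodule ℝ E =>
        (W.subtypeL.comp W.orthogonalProjection : E →L[ℝ] E))
      (tγ := inferInstance))
  rw [hind.dense_iff]
  rintro ⟨W, hrk, hPD⟩
  rw [Metric.mem_closure_iff]
  intro ε hε
  -- a basis of W
  let bW : Module.Basis (Fin 2) ℝ W := Module.finBasisOfFinrankEq ℝ W hrk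
  set v₀ : E := (bW 0 : E) with hv₀
  set v₁ : E := (bW 1 : E) with hv₁
  have hli : LinearIndependent ℝ (fun i => ((bW i : W) : E)) :=
    bW.linearIndependent.map' W.subtype (Submodule.ker_subtype W)
  have hpairfun : (fun i : Fin 2 => ((bW i : W) : E)) = ![v₀, v₁] := by
    funext i; fin_cases i <;> rfl
  have hvind : ∀ a b : ℝ, a • v₀ + b • v₁ = 0 → a = 0 ∧ b = 0 :=
    LinearIndependent.pair_iff.mp (hpairfun ▸ hli)
  have hspW : Submodule.span ℝ {v₀, v₁} = W := by
    rw [← range_pair v₀ v₁, ← hpairfun]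
    calc Submodule.span ℝ (Set.range fun i => ((bW i : W) : E))
        = Submodule.map W.subtype (Submodule.span ℝ (Set.range bW)) := by
          rw [Submodule.map_span]; congr 1
          rw [← Set.range_comp]; rfl
      _ = Submodule.map W.subtype ⊤ := by rw [bW.span_eq]
      _ = W := Submodule.map_subtype_top W
  have hPDv : ∀ x ∈ Submodule.span ℝ {v₀, v₁}, x ≠ 0 → 0 < B x x := by
    rw [hspW]; exact fun x hx hx0 => hPD x hx hx0
  obtain ⟨hv00, hvdet⟩ := det_pos_of_posdef B v₀ v₁ (hBsym _ _) hvind hPDv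
  have hgd : gdet v₀ v₁ ≠ 0 := hIPD v₀ v₁ hvind
  have hFW : G ⟨W, hrk, hPD⟩ = qOp v₀ v₁ := by
    apply ContinuousLinearMap.ext; intro x
    show (W.subtypeL.comp W.orthogonalProjection : E →L[ℝ] E) x = qOp v₀ v₁ x
    rw [← hspW]
    exact (qOp_eq_proj v₀ v₁ hgd x).symm
  -- eventually conditions near (v₀, v₁)
  have hcA : ContinuousAt (fun q : E × E => B q.1 q.1) (v₀, v₁) :=
    (hBcont.comp (continuous_fst.prodMk continuous_fst)).continuousAt
  have hcD : ContinuousAt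
      (fun q : E × E => B q.1 q.1 * B q.2 q.2 - B q.1 q.2 * B q.1 q.2) (v₀, v₁) := by
    have c1 : Continuous fun q : E × E => B q.1 q.1 :=
      hBcont.comp (continuous_fst.prodMk continuous_fst)
    have c2 : Continuous fun q : E × E => B q.2 q.2 :=
      hBcont.comp (continuous_snd.prodMk continuous_snd)
    have c3 : Continuous fun q : E × E => B q.1 q.2 := hBcont
    exact ((c1.mul c2).sub (c3.mul c3)).continuousAt
  have h1 : ∀ᶠ q in nhds (v₀, v₁), dist (qOp q.1 q.2) (G ⟨W, hrk, hPD⟩) < ε := by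
    have ht : Filter.Tendsto (fun q : E × E => qOp q.1 q.2) (nhds (v₀, v₁))
        (nhds (G ⟨W, hrk, hPD⟩)) := by
      rw [hFW]; exact qOp_continuousAt hgd
    filter_upwards [ht (Metric.ball_mem_nhds _ hε)] with q hq
    exact hq
  have h2 : ∀ᶠ q in nhds (v₀, v₁), 0 < B q.1 q.1 := hcA (Ioi_mem_nhds hv00)
  have h3 : ∀ᶠ q in nhds (v₀, v₁),
      0 < B q.1 q.1 * B q.2 q.2 - B q.1 q.2 * B q.1 q.2 := hcD (Ioi_mem_nhds hvdet)
  have hDD : Dense ((ratPts L) ×ˢ (ratPts L)) :=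
    (dense_ratPts L hLspan).prod (dense_ratPts L hLspan)
  obtain ⟨⟨w₀, w₁⟩, hwT, hwD⟩ :=
    mem_closure_iff_nhds.mp (hDD (v₀, v₁)) _ (h1.and (h2.and h3))
  obtain ⟨hw1, hw2, hw3⟩ := hwT
  have hindw : ∀ a b : ℝ, a • w₀ + b • w₁ = 0 → a = 0 ∧ b = 0 :=
    pair_indep_of_det_pos B w₀ w₁ (hBsym _ _) hw2 hw3
  have hPDw : PosDefOn B (Submodule.span ℝ {w₀, w₁}) :=
    posdef_span_of_det_pos B w₀ w₁ (hBsym _ _) hw2 hw3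
  have hrkw : Module.finrank ℝ (Submodule.span ℝ ({w₀, w₁} : Set E)) = 2 :=
    finrank_span_pair_eq_two hindw
  have hgdw : gdet w₀ w₁ ≠ 0 := hIPD w₀ w₁ hindw
  refine ⟨G ⟨Submodule.span ℝ {w₀, w₁}, hrkw, hPDw⟩,
    ⟨⟨Submodule.span ℝ {w₀, w₁}, hrkw, hPDw⟩,
      isRatSubspace_span_pair L hwD.1 hwD.2, rfl⟩, ?_⟩
  have hGw : G ⟨Submodule.span ℝ {w₀, w₁}, hrkw, hPDw⟩ = qOp w₀ w₁ :=
    ContinuousLinearMap.ext fun x => (qOp_eq_proj w₀ w₁ hgdw x).symm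
  rw [hGw, dist_comm]
  exact hw1
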